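/- In the no-overbidding equilibrium with any tie-breaking rule, if buyer i is a monopsonist at a decision node x (i.e. f_{−i}(x) = 0), then buyer i's equilibrium forward utility equals her greedy utility, u_i(x) = μ_i(x), and consequently her equilibrium bid at x satisfies b_i(x) = min( v_i(1|x), p_i(x) ). -/

import Mathlib

open Finset

noncomputable section

/-- The opponent of buyer `i`. -/
def other (i : Fin 2) : Fin 2 := 1 - i

/-- The standard unit vector of buyer `i`: winning one item moves `x` to `x + e i`. -/
def e (i : Fin 2) : Fin 2 → ℕ := Pi.single i 1

/-- Remaining supply `t(x) = T - x₁ - x₂` at node `x`. -/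
def supply (T : ℕ) (x : Fin 2 → ℕ) : ℕ := T - (x 0 + x 1)

/-- `x` is a decision node: `x₁ + x₂ < T`. -/
def IsDecision (T : ℕ) (x : Fin 2 → ℕ) : Prop := x 0 + x 1 < T

/-- Incremental value `v_i(k|x) = v_i(x_i + k)`. -/
def val (v : Fin 2 → ℕ → ℝ) (i : Fin 2) (k : ℕ) (x : Fin 2 → ℕ) : ℝ := v i (x i + k)

/-- Valuations are nonnegative and weakly decreasing. -/
def Admissible (v : Fin 2 → ℕ → ℝ) : Prop := ∀ i k, 0 ≤ v i k ∧ v i (k + 1) ≤ v i k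

/-- Greedy payoff `μ̄_i(k|x) = Σ_{j=1}^k v_i(j|x) - k · v_{-i}(t-k+1|x)`. -/
def gbar (T : ℕ) (v : Fin 2 → ℕ → ℝ) (i : Fin 2) (k : ℕ) (x : Fin 2 → ℕ) : ℝ :=
  (∑ j ∈ Finset.Icc 1 k, val v i j x) - (k : ℝ) * val v (other i) (supply T x - k + 1) x

/-- Greedy utility `μ_i(x) = max_{0 ≤ k ≤ t} μ̄_i(k|x)` (equal to `0` at terminal nodes). -/
def gu (T : ℕ) (v : Fin 2 → ℕ → ℝ) (i : Fin 2) (x : Fin 2 → ℕ) : ℝ :=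
  Finset.sup' (Finset.range (supply T x + 1)) Finset.nonempty_range_add_one
    (fun k => gbar T v i k x)

/-- Greedy demand `κ_i(x)`: the least `k ∈ {0,…,t}` attaining the greedy utility. -/
def gd (T : ℕ) (v : Fin 2 → ℕ → ℝ) (i : Fin 2) (x : Fin 2 → ℕ) : ℕ :=
  sInf {k | k ≤ supply T x ∧ gbar T v i k x = gu T v i x}

/-- Duopsony factor `f_i(x) = max ({k ∈ {1,…,t} : v_i(k|x) > v_{-i}(t-k+1|x)} ∪ {0})`. -/
def df (T : ℕ) (v : Fin 2 → ℕ → ℝ) (i : Fin 2) (x : Fin 2 → ℕ) : ℕ :=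
  sSup {k | 1 ≤ k ∧ k ≤ supply T x ∧
    val v (other i) (supply T x - k + 1) x < val v i k x}

/-- Baseline price `β_i(x)`. -/
def base (T : ℕ) (v : Fin 2 → ℕ → ℝ) (i : Fin 2) (x : Fin 2 → ℕ) : ℝ :=
  if df T v i x = 0 then val v i 1 x
  else val v (other i) (supply T x - gd T v i x + 1) x

/-- Threshold price `p_i(x) = v_i(1|x) + μ_i(x+e_i) - μ_i(x+e_{-i})`. -/
def tp (T : ℕ) (v : Fin 2 → ℕ → ℝ) (i : Fin 2) (x : Fin 2 → ℕ) : ℝ :=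
  val v i 1 x + gu T v i (x + e i) - gu T v i (x + e (other i))

/-- A tie-breaking rule: probabilities assigned to the two buyers at each decision node. -/
def TieBreaking (T : ℕ) (π : Fin 2 → (Fin 2 → ℕ) → ℝ) : Prop :=
  ∀ x : Fin 2 → ℕ, IsDecision T x →
    (∀ i, 0 ≤ π i x ∧ π i x ≤ 1) ∧ π 0 x + π 1 x = 1

/-- The no-overbidding equilibrium for the tie-breaking rule `π`, described by its
forward utilities `u`, bids `b` and winning probabilities `q`, which satisfy the
defining backward recursion. -/
structure Equilibrium (T : ℕ) (v : Fin 2 → ℕ → ℝ) (π : Fin 2 → (Fin 2 → ℕ) → ℝ) where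
  u : Fin 2 → (Fin 2 → ℕ) → ℝ
  b : Fin 2 → (Fin 2 → ℕ) → ℝ
  q : Fin 2 → (Fin 2 → ℕ) → ℝ
  u_terminal : ∀ i x, ¬ IsDecision T x → u i x = 0
  bid_def : ∀ i x, IsDecision T x →
    b i x = min (val v i 1 x) (val v i 1 x + u i (x + e i) - u i (x + e (other i)))
  q_win : ∀ i x, IsDecision T x → b (other i) x < b i x → q i x = 1
  q_lose : ∀ i x, IsDecision T x → b i x < b (other i) x → q i x = 0
  q_tie : ∀ i x, IsDecision T x → b i x = b (other i) x → q i x = π i x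
  u_def : ∀ i x, IsDecision T x →
    u i x = q i x * (val v i 1 x - b (other i) x + u i (x + e i))
            + (1 - q i x) * u i (x + e (other i))

/-- The price paid at node `x`: the lower of the two bids. -/
def price {T : ℕ} {v : Fin 2 → ℕ → ℝ} {π : Fin 2 → (Fin 2 → ℕ) → ℝ}
    (E : Equilibrium T v π) (x : Fin 2 → ℕ) : ℝ := min (E.b 0 x) (E.b 1 x)

/-!
Write `j` for the rival of `i`. The greedy utility obeys the Bellman recursion
`μ_i(x) = max (μ_i(x+e_j), v_i(1|x) - v_j(1|x) + μ_i(x+e_i))`. So once `i`'s continuation utilities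
are greedy, her bid is the threshold price `p_i(x)` and her gain over losing is
`max 0 (p_i(x) - b_j(x))`, which equals `μ_i(x) - μ_i(x+e_j) = max 0 (p_i(x) - v_j(1|x))` as soon as
`b_j(x) ≥ min (v_j(1|x), p_i(x))`. That lower bound on the rival's bid holds when the rival gains at
most `D(x) = max 0 (v_j(1|x) - p_i(x))` by winning at `x` rather than losing, and backward induction
carries this bound along with `u_i = μ_i`. It propagates because `D` can only shrink after `i`
wins, a concavity of `μ_i` in `i`'s holdings which is where monopsony enters.
-/

lemma other_other (i : Fin 2) : other (other i) = i := by
  fin_cases i <;> rfl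

lemma other_ne (i : Fin 2) : other i ≠ i := by
  fin_cases i <;> decide

lemma add_e_apply_self (x : Fin 2 → ℕ) (i : Fin 2) : (x + e i) i = x i + 1 := by
  simp [e]

lemma add_e_apply_of_ne (x : Fin 2 → ℕ) {i k : Fin 2} (h : k ≠ i) : (x + e i) k = x k := by
  simp [e, Pi.single_eq_of_ne h]

lemma supply_add_e (T : ℕ) (x : Fin 2 → ℕ) (i : Fin 2) :
    supply T (x + e i) = supply T x - 1 := by
  fin_cases i <;> simp [supply, e] <;> omega

lemma isDecision_iff_supply_pos {T : ℕ} {x : Fin 2 → ℕ} : IsDecision T x ↔ 0 < supply T x := by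
  simp only [IsDecision, supply]
  omega

lemma val_add_e_self (v : Fin 2 → ℕ → ℝ) (i : Fin 2) (k : ℕ) (x : Fin 2 → ℕ) :
    val v i k (x + e i) = val v i (k + 1) x := by
  simp only [_root_.val, add_e_apply_self, add_assoc, add_comm 1 k]

lemma val_add_e_of_ne (v : Fin 2 → ℕ → ℝ) {i m : Fin 2} (h : i ≠ m) (k : ℕ) (x : Fin 2 → ℕ) :
    val v i k (x + e m) = val v i k x := by
  simp only [_root_.val, add_e_apply_of_ne x h]

lemma Admissible.val_antitone {v : Fin 2 → ℕ → ℝ} (hv : Admissible v) (i : Fin 2)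
    (x : Fin 2 → ℕ) : Antitone fun k => val v i k x :=
  antitone_nat_of_succ_le fun k => (hv i (x i + k)).2

lemma add_sum_Icc_shift {M : Type*} [AddCommMonoid M] (f : ℕ → M) (k : ℕ) :
    f 1 + ∑ m ∈ Icc 1 k, f (m + 1) = ∑ m ∈ Icc 1 (k + 1), f m := by
  induction k with
  | zero => simp
  | succ k ih =>
    rw [sum_Icc_succ_top (by omega), sum_Icc_succ_top (by omega) f, ← ih]
    exact (add_assoc _ _ _).symm

section Greedy

variable {T : ℕ} {v : Fin 2 → ℕ → ℝ} {i : Fin 2} {x : Fin 2 → ℕ}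

lemma gbar_le_gu {k : ℕ} (hk : k ≤ supply T x) : gbar T v i k x ≤ gu T v i x :=
  le_sup' (fun k => gbar T v i k x) (mem_range.2 (Nat.lt_succ_of_le hk))

lemma gu_le {M : ℝ} (h : ∀ k ≤ supply T x, gbar T v i k x ≤ M) : gu T v i x ≤ M :=
  sup'_le _ _ fun k hk => h k (Nat.lt_succ_iff.1 (mem_range.1 hk))

lemma exists_gbar_eq_gu : ∃ k ≤ supply T x, gbar T v i k x = gu T v i x := by
  obtain ⟨k, hk, h⟩ := exists_mem_eq_sup' nonempty_range_add_one fun k => gbar T v i k x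
  exact ⟨k, Nat.lt_succ_iff.1 (mem_range.1 hk), h.symm⟩

lemma gbar_zero : gbar T v i 0 x = 0 := by
  simp [gbar]

lemma gu_nonneg : 0 ≤ gu T v i x :=
  gbar_zero (T := T) ▸ gbar_le_gu (Nat.zero_le _)

lemma gu_eq_zero_of_supply_eq_zero (h : supply T x = 0) : gu T v i x = 0 :=
  le_antisymm (gu_le fun k hk => by simp [Nat.le_zero.1 (h ▸ hk), gbar_zero]) gu_nonneg

lemma gbar_add_e_other {k : ℕ} (hk : k < supply T x) :
    gbar T v i k (x + e (other i)) = gbar T v i k x := by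
  have hsupply : supply T x - 1 - k + 1 + 1 = supply T x - k + 1 := by omega
  simp only [gbar, supply_add_e, val_add_e_of_ne v (other_ne i).symm, val_add_e_self, hsupply]

lemma gbar_add_e_self {k : ℕ} (hk : k < supply T x) :
    gbar T v i k (x + e i) =
      gbar T v i (k + 1) x - val v i 1 x + val v (other i) (supply T x - k) x := by
  have hsupply : supply T x - 1 - k + 1 = supply T x - k := by omega
  have hsupply' : supply T x - (k + 1) + 1 = supply T x - k := by omega
  simp only [gbar, supply_add_e, val_add_e_of_ne v (other_ne i), val_add_e_self, hsupply,
    hsupply', ← add_sum_Icc_shift (fun m => val v i m x)]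
  push_cast
  ring

lemma gu_add_e_other_le (hx : IsDecision T x) : gu T v i (x + e (other i)) ≤ gu T v i x := by
  rw [isDecision_iff_supply_pos] at hx
  refine gu_le fun k hk => ?_
  rw [supply_add_e] at hk
  rw [gbar_add_e_other (by omega)]
  exact gbar_le_gu (by omega)

lemma gu_add_e_self_le (hv : Admissible v) (hx : IsDecision T x) :
    val v i 1 x - val v (other i) 1 x + gu T v i (x + e i) ≤ gu T v i x := by
  rw [isDecision_iff_supply_pos] at hx
  suffices gu T v i (x + e i) ≤ gu T v i x - val v i 1 x + val v (other i) 1 x by linarith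
  refine gu_le fun k hk => ?_
  rw [supply_add_e] at hk
  rw [gbar_add_e_self (by omega)]
  have hle : gbar T v i (k + 1) x ≤ gu T v i x := gbar_le_gu (by omega)
  have hval : val v (other i) (supply T x - k) x ≤ val v (other i) 1 x :=
    hv.val_antitone (other i) x (by omega)
  linarith

lemma gu_eq_max (hv : Admissible v) (hx : IsDecision T x) :
    gu T v i x = max (gu T v i (x + e (other i)))
      (val v i 1 x - val v (other i) 1 x + gu T v i (x + e i)) := by
  refine le_antisymm (gu_le fun k hk => ?_)
    (max_le (gu_add_e_other_le hx) (gu_add_e_self_le hv hx))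
  rcases hk.lt_or_eq with hlt | rfl
  · rw [← gbar_add_e_other hlt]
    exact (gbar_le_gu (x := x + e (other i)) (by rw [supply_add_e]; omega)).trans
      (le_max_left _ _)
  · have hx' := isDecision_iff_supply_pos.1 hx
    have hlast := gbar_add_e_self (T := T) (v := v) (i := i) (x := x)
      (k := supply T x - 1) (by omega)
    have hle : gbar T v i (supply T x - 1) (x + e i) ≤ gu T v i (x + e i) :=
      gbar_le_gu (by rw [supply_add_e])
    rw [Nat.sub_add_cancel hx', Nat.sub_sub_self hx'] at hlast
    exact le_max_of_le_right (by linarith)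

lemma gu_add_e_self_le_gu_add_e_other (hv : Admissible v) (hx : IsDecision T x) :
    gu T v i (x + e i) ≤ gu T v i (x + e (other i)) := by
  refine gu_le fun k hk => ?_
  rw [supply_add_e] at hk
  have hpos := isDecision_iff_supply_pos.1 hx
  have hk' : k < supply T x := by omega
  have hle : gbar T v i k (x + e (other i)) ≤ gu T v i (x + e (other i)) :=
    gbar_le_gu (x := x + e (other i)) (by rw [supply_add_e]; omega)
  rw [gbar_add_e_other hk'] at hle
  rw [gbar_add_e_self hk']
  have hsucc : gbar T v i (k + 1) x = gbar T v i k x + val v i (k + 1) x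
      - (k + 1) * val v (other i) (supply T x - k) x
      + k * val v (other i) (supply T x - k + 1) x := by
    have hsupply : supply T x - (k + 1) + 1 = supply T x - k := by omega
    simp only [gbar, sum_Icc_succ_top (Nat.le_add_left 1 k), hsupply]
    push_cast
    ring
  have hvi : val v i (k + 1) x ≤ val v i 1 x := hv.val_antitone i x (by omega)
  have hvj : val v (other i) (supply T x - k + 1) x ≤ val v (other i) (supply T x - k) x :=
    hv.val_antitone (other i) x (by omega)
  have hk0 : (0 : ℝ) ≤ k := k.cast_nonneg
  nlinarith

end Greedy

section ThresholdPrice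

variable {T : ℕ} {v : Fin 2 → ℕ → ℝ} {i : Fin 2} {x : Fin 2 → ℕ}

lemma gu_eq_add_max_tp (hv : Admissible v) (hx : IsDecision T x) :
    gu T v i x = gu T v i (x + e (other i)) + max 0 (tp T v i x - val v (other i) 1 x) := by
  rw [gu_eq_max hv hx, ← max_add_add_left, add_zero, tp]
  congr 1
  ring

def rivalSurplus (T : ℕ) (v : Fin 2 → ℕ → ℝ) (i : Fin 2) (x : Fin 2 → ℕ) : ℝ :=
  max 0 (val v (other i) 1 x - tp T v i x)

lemma rivalSurplus_nonneg : 0 ≤ rivalSurplus T v i x :=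
  le_max_left _ _

lemma rivalSurplus_eq (hv : Admissible v) (hx : IsDecision T x) :
    rivalSurplus T v i x =
      gu T v i x - (val v i 1 x - val v (other i) 1 x + gu T v i (x + e i)) := by
  rw [gu_eq_max hv hx, ← max_sub_sub_right, sub_self, max_comm, rivalSurplus, tp]
  congr 1
  ring

end ThresholdPrice

def IsMonopsonist (T : ℕ) (v : Fin 2 → ℕ → ℝ) (i : Fin 2) (x : Fin 2 → ℕ) : Prop :=
  ∀ k, 1 ≤ k → k ≤ supply T x → val v (other i) k x ≤ val v i (supply T x - k + 1) x

namespace IsMonopsonist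

variable {T : ℕ} {v : Fin 2 → ℕ → ℝ} {i : Fin 2} {x : Fin 2 → ℕ}

lemma of_df_eq_zero (h : df T v (other i) x = 0) : IsMonopsonist T v i x := by
  intro k hk1 hkt
  by_contra! hlt
  have hbdd : BddAbove {k | 1 ≤ k ∧ k ≤ supply T x ∧
      val v (other (other i)) (supply T x - k + 1) x < val v (other i) k x} :=
    ⟨supply T x, fun _ hm => hm.2.1⟩
  have hle : k ≤ df T v (other i) x := le_csSup hbdd ⟨hk1, hkt, by rwa [other_other]⟩
  omega

lemma add_e_self (hm : IsMonopsonist T v i x) : IsMonopsonist T v i (x + e i) := by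
  intro k hk1 hkt
  rw [supply_add_e] at hkt ⊢
  rw [val_add_e_of_ne v (other_ne i), val_add_e_self,
    show supply T x - 1 - k + 1 + 1 = supply T x - k + 1 by omega]
  exact hm k hk1 (by omega)

lemma add_e_other (hm : IsMonopsonist T v i x) : IsMonopsonist T v i (x + e (other i)) := by
  intro k hk1 hkt
  rw [supply_add_e] at hkt ⊢
  rw [val_add_e_self, val_add_e_of_ne v (other_ne i).symm,
    show supply T x - 1 - k + 1 = supply T x - (k + 1) + 1 by omega]
  exact hm (k + 1) (by omega) (by omega)

lemma gu_add_e_self_concave (hv : Admissible v) (hm : IsMonopsonist T v i x)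
    (h2 : 2 ≤ supply T x) :
    gu T v i (x + e i) - gu T v i (x + e i + e i) - val v i 2 x ≤
      gu T v i x - gu T v i (x + e i) - val v i 1 x := by
  obtain ⟨m, hmt, hm_eq⟩ := exists_gbar_eq_gu (T := T) (v := v) (i := i) (x := x + e i)
  rw [supply_add_e] at hmt
  rw [← hm_eq]
  rcases m with _ | k
  · -- buying one item at `x` already beats the bound, by monopsony at `k = t - 1`
    have hone : gbar T v i 1 x ≤ gu T v i x := gbar_le_gu (by omega)
    have hmono := hm (supply T x - 1) (by omega) (by omega)
    rw [show supply T x - (supply T x - 1) + 1 = 2 by omega] at hmono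
    have hval : val v (other i) (supply T x) x ≤ val v (other i) (supply T x - 1) x :=
      hv.val_antitone (other i) x (by omega)
    have hgbar_one : gbar T v i 1 x = val v i 1 x - val v (other i) (supply T x) x := by
      simp [gbar, Nat.sub_add_cancel (by omega : 1 ≤ supply T x)]
    have hnonneg := gu_nonneg (T := T) (v := v) (i := i) (x := x + e i + e i)
    rw [gbar_zero]
    linarith
  · -- the optimal demand at `x + e i`, shifted by one either way, is feasible at `x` and `x + 2e_i`
    have hright := gbar_add_e_self (T := T) (v := v) (i := i) (x := x) (k := k + 1) (by omega)
    have hleft := gbar_add_e_self (T := T) (v := v) (i := i) (x := x + e i) (k := k)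
      (by rw [supply_add_e]; omega)
    rw [supply_add_e, val_add_e_self, val_add_e_of_ne v (other_ne i),
      show supply T x - 1 - k = supply T x - (k + 1) by omega] at hleft
    have hx2 : gbar T v i (k + 2) x ≤ gu T v i x := gbar_le_gu (by omega)
    have hxii : gbar T v i k (x + e i + e i) ≤ gu T v i (x + e i + e i) :=
      gbar_le_gu (by rw [supply_add_e, supply_add_e]; omega)
    linarith

lemma rivalSurplus_add_e_self_le (hv : Admissible v) (hm : IsMonopsonist T v i x)
    (h2 : 2 ≤ supply T x) : rivalSurplus T v i (x + e i) ≤ rivalSurplus T v i x := by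
  have hx : IsDecision T x := isDecision_iff_supply_pos.2 (by omega)
  have hxi : IsDecision T (x + e i) := isDecision_iff_supply_pos.2 (by rw [supply_add_e]; omega)
  rw [rivalSurplus_eq hv hx, rivalSurplus_eq hv hxi, val_add_e_self,
    val_add_e_of_ne v (other_ne i)]
  have hconcave := hm.gu_add_e_self_concave hv h2
  linarith

end IsMonopsonist

namespace Equilibrium

variable {T : ℕ} {v : Fin 2 → ℕ → ℝ} {π : Fin 2 → (Fin 2 → ℕ) → ℝ} (E : Equilibrium T v π)
  {x : Fin 2 → ℕ}

lemma u_eq_zero (h : supply T x = 0) (i : Fin 2) : E.u i x = 0 :=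
  E.u_terminal i x (by rw [isDecision_iff_supply_pos]; omega)

lemma q_mem_Icc (hπ : TieBreaking T π) (hx : IsDecision T x) (i : Fin 2) :
    E.q i x ∈ Set.Icc 0 1 := by
  rcases lt_trichotomy (E.b i x) (E.b (other i) x) with h | h | h
  · simp [E.q_lose i x hx h]
  · rw [E.q_tie i x hx h]
    exact (hπ x hx).1 i
  · simp [E.q_win i x hx h]

lemma q_mul_bid_sub (hx : IsDecision T x) (i : Fin 2) :
    E.q i x * (E.b i x - E.b (other i) x) = max 0 (E.b i x - E.b (other i) x) := by
  rcases lt_trichotomy (E.b i x) (E.b (other i) x) with h | h | h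
  · rw [E.q_lose i x hx h, max_eq_left (by linarith)]
    ring
  · rw [h, sub_self, mul_zero, max_self]
  · rw [E.q_win i x hx h, max_eq_right (by linarith)]
    ring

lemma u_eq_add_q_mul (hx : IsDecision T x) (i : Fin 2) :
    E.u i x = E.u i (x + e (other i)) + E.q i x *
      (val v i 1 x + E.u i (x + e i) - E.u i (x + e (other i)) - E.b (other i) x) := by
  rw [E.u_def i x hx]
  ring

lemma bid_eq_of_le (hx : IsDecision T x) {i : Fin 2}
    (h : E.u i (x + e i) ≤ E.u i (x + e (other i))) :
    E.b i x = val v i 1 x + E.u i (x + e i) - E.u i (x + e (other i)) := by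
  rw [E.bid_def i x hx, min_eq_right (by linarith)]

lemma u_eq_add_max_of_le (hx : IsDecision T x) {i : Fin 2}
    (h : E.u i (x + e i) ≤ E.u i (x + e (other i))) :
    E.u i x = E.u i (x + e (other i)) + max 0 (E.b i x - E.b (other i) x) := by
  rw [E.u_eq_add_q_mul hx i, ← E.q_mul_bid_sub hx i, E.bid_eq_of_le hx h]

/-- Winning is never worse than losing: a positive chance to win requires `b_i ≥ b_{-i}`, and
the continuation gain `v_i(1|x) + u_i(x+e_i) - u_i(x+e_{-i})` is at least the bid. -/
lemma u_add_e_other_le (hπ : TieBreaking T π) (hx : IsDecision T x) (i : Fin 2) :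
    E.u i (x + e (other i)) ≤ E.u i x := by
  rw [E.u_eq_add_q_mul hx i, le_add_iff_nonneg_right]
  rcases lt_or_ge (E.b i x) (E.b (other i) x) with h | h
  · rw [E.q_lose i x hx h, zero_mul]
  · have hbid := E.bid_def i x hx
    have hbid_le : E.b i x ≤ val v i 1 x + E.u i (x + e i) - E.u i (x + e (other i)) :=
      hbid ▸ min_le_right _ _
    exact mul_nonneg (E.q_mem_Icc hπ hx i).1 (by linarith)

variable {i : Fin 2}

lemma rival_bid_mem_Icc (hx : IsDecision T x)
    (hrival : E.u (other i) (x + e i) ≤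
      rivalSurplus T v i x + E.u (other i) (x + e (other i))) :
    E.b (other i) x ∈
      Set.Icc (val v (other i) 1 x - rivalSurplus T v i x) (val v (other i) 1 x) := by
  rw [E.bid_def (other i) x hx, other_other]
  exact ⟨le_min (by linarith [rivalSurplus_nonneg (T := T) (v := v) (i := i) (x := x)])
    (by linarith), min_le_left _ _⟩

lemma monopsonist_step (hv : Admissible v) (hπ : TieBreaking T π) (hx : IsDecision T x)
    (hui : E.u i (x + e i) = gu T v i (x + e i))
    (huj : E.u i (x + e (other i)) = gu T v i (x + e (other i)))
    (hrival : E.u (other i) (x + e i) ≤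
      rivalSurplus T v i x + E.u (other i) (x + e (other i))) :
    E.u i x = gu T v i x ∧
      E.u (other i) x ≤ rivalSurplus T v i x + E.u (other i) (x + e (other i)) := by
  have hle : E.u i (x + e i) ≤ E.u i (x + e (other i)) := by
    rw [hui, huj]
    exact gu_add_e_self_le_gu_add_e_other hv hx
  have hbi : E.b i x = tp T v i x := by
    rw [E.bid_eq_of_le hx hle, hui, huj, tp]
  obtain ⟨hbj_ge, hbj_le⟩ := E.rival_bid_mem_Icc hx hrival
  constructor
  · have hgain : max 0 (tp T v i x - E.b (other i) x) =
        max 0 (tp T v i x - val v (other i) 1 x) := by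
      rcases le_total (tp T v i x) (val v (other i) 1 x) with h | h
      · rw [rivalSurplus, max_eq_right (by linarith)] at hbj_ge
        rw [max_eq_left (by linarith), max_eq_left (by linarith)]
      · rw [rivalSurplus, max_eq_left (by linarith)] at hbj_ge
        rw [le_antisymm hbj_le (by linarith)]
    rw [E.u_eq_add_max_of_le hx hle, hbi, hgain, huj, gu_eq_add_max_tp hv hx]
  · have hwin : val v (other i) 1 x - E.b i x ≤ rivalSurplus T v i x :=
      hbi ▸ le_max_right _ _
    obtain ⟨hq0, hq1⟩ := E.q_mem_Icc hπ hx (other i)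
    have hconvex := E.u_def (other i) x hx
    rw [other_other] at hconvex
    rw [hconvex]
    calc _ ≤ E.q (other i) x * (rivalSurplus T v i x + E.u (other i) (x + e (other i)))
          + (1 - E.q (other i) x) * (rivalSurplus T v i x + E.u (other i) (x + e (other i))) :=
          add_le_add (mul_le_mul_of_nonneg_left (by linarith) hq0)
            (mul_le_mul_of_nonneg_left hrival (by linarith))
      _ = _ := by ring

theorem u_eq_gu_of_isMonopsonist (hv : Admissible v) (hπ : TieBreaking T π)
    (hm : IsMonopsonist T v i x) :
    E.u i x = gu T v i x ∧
      E.u (other i) x ≤ rivalSurplus T v i x + E.u (other i) (x + e (other i)) := by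
  induction hn : supply T x generalizing x with
  | zero =>
    have hn' : supply T (x + e (other i)) = 0 := by rw [supply_add_e, hn]
    rw [E.u_eq_zero hn, E.u_eq_zero hn, E.u_eq_zero hn', gu_eq_zero_of_supply_eq_zero hn]
    exact ⟨rfl, by simpa using rivalSurplus_nonneg⟩
  | succ n ih =>
    have hx : IsDecision T x := isDecision_iff_supply_pos.2 (by omega)
    have hchild (k : Fin 2) : supply T (x + e k) = n := by rw [supply_add_e, hn]; rfl
    obtain ⟨hui, hrival_i⟩ := ih hm.add_e_self (hchild i)
    obtain ⟨huj, -⟩ := ih hm.add_e_other (hchild (other i))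
    refine E.monopsonist_step hv hπ hx hui huj ?_
    rcases Nat.eq_zero_or_pos n with rfl | hn_pos
    · rw [E.u_eq_zero (hchild i), E.u_eq_zero (hchild (other i)), add_zero]
      exact rivalSurplus_nonneg
    · have hshrink := hm.rivalSurplus_add_e_self_le hv (by omega)
      have hlater := E.u_add_e_other_le hπ
        (isDecision_iff_supply_pos.2 (by rw [hchild (other i)]; omega)) (other i)
      rw [other_other, add_right_comm] at hlater
      linarith

end Equilibrium

/-- A monopsonist's equilibrium forward utility equals her greedy utility, and she
bids the minimum of her incremental value and her threshold price. -/
theorem stmt12 (T : ℕ) (v : Fin 2 → ℕ → ℝ) (π : Fin 2 → (Fin 2 → ℕ) → ℝ)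
    (hv : Admissible v) (hπ : TieBreaking T π) (E : Equilibrium T v π)
    (x : Fin 2 → ℕ) (hx : IsDecision T x) (i : Fin 2)
    (hmono : df T v (other i) x = 0) :
    E.u i x = gu T v i x ∧ E.b i x = min (val v i 1 x) (tp T v i x) := by
  have hm := IsMonopsonist.of_df_eq_zero hmono
  refine ⟨(E.u_eq_gu_of_isMonopsonist hv hπ hm).1, ?_⟩
  rw [E.bid_def i x hx, (E.u_eq_gu_of_isMonopsonist hv hπ hm.add_e_self).1,
    (E.u_eq_gu_of_isMonopsonist hv hπ hm.add_e_other).1, tp]
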